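/- arXiv:cs/0609049 — 2 statements merged into one kernel-verified Lean document; each statement's English description precedes it below -/
import Mathlib

section
/- Let X_B be an arbitrarily distributed binary random field on a finite set of sites B (measure Q_B on {0,1}^B) and l : {0,1}×[0,1] → [0,∞) a loss function. For any (possibly data-dependent) scan Ψ for B, let L*(Ψ) = inf over predictors F of E_{Q_B} L_{(Ψ,F)}(X_B), and let H(X_B) = −Σ_{x∈{0,1}^B} Q_B(x) log Q_B(x) (nats). Then for every α, β ∈ ℝ: | α·H(X_B)/|B| + β − L*(Ψ)/|B| | ≤ ε_l(α,β); in particular, with (α_l,β_l) achieving the infimum defining ε_l, the left-hand side is at most ε_l. -/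
open MeasureTheory Filter Real

namespace Scandiction

variable {A D B : Type*}

def visits (Ψ : ∀ t : ℕ, (Fin t → A) → B) (x : B → A) : ℕ → B
  | t => Ψ t fun i : Fin t => x (visits Ψ x i)
  decreasing_by exact i.isLt

def IsValidScan [Fintype B] (Ψ : ∀ t : ℕ, (Fin t → A) → B) : Prop :=
  ∀ x : B → A, Function.Bijective fun t : Fin (Fintype.card B) => visits Ψ x t.1

noncomputable def cumLoss [Fintype B] (l : A → D → ℝ)
    (Ψ : ∀ t : ℕ, (Fin t → A) → B) (F : ∀ t : ℕ, (Fin t → A) → D) (x : B → A) : ℝ :=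
  ∑ t : Fin (Fintype.card B),
    l (x (visits Ψ x t.1)) (F t.1 fun i : Fin t.1 => x (visits Ψ x i.1))

/-- Binary entropy (in nats): `h_b(p) = -p log p - (1-p) log (1-p)`. -/
noncomputable def hb (p : ℝ) : ℝ := Real.negMulLog p + Real.negMulLog (1 - p)

/-- Bayes envelope `φ_l(p) = inf_{q ∈ [0,1]} [(1-p)·l(0,q) + p·l(1,q)]`. -/
noncomputable def bayesEnv (l : Bool → unitInterval → ℝ) (p : ℝ) : ℝ :=
  ⨅ q : unitInterval, ((1 - p) * l false q + p * l true q)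

/-- `ε_l(α,β) = sup_{p ∈ [0,1]} |α·h_b(p) + β − φ_l(p)|`. -/
noncomputable def epsF (l : Bool → unitInterval → ℝ) (α β : ℝ) : ℝ :=
  ⨆ p : unitInterval, |α * hb (p : ℝ) + β - bayesEnv l (p : ℝ)|

/-- `ε_l = inf_{α,β} ε_l(α,β)`. -/
noncomputable def epsL (l : Bool → unitInterval → ℝ) : ℝ :=
  ⨅ ab : ℝ × ℝ, epsF l ab.1 ab.2

/-- Expected cumulative loss, under the law `Q` on `{0,1}^B`, of the scan `Ψ` accompanied
by its optimal predictor. -/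
noncomputable def optScanLoss [Fintype B] [DecidableEq B] (l : Bool → unitInterval → ℝ)
    (Q : (B → Bool) → ℝ) (Ψ : ∀ t : ℕ, (Fin t → Bool) → B) : ℝ :=
  ⨅ F : ∀ t : ℕ, (Fin t → Bool) → unitInterval, ∑ x : B → Bool, Q x * cumLoss l Ψ F x

/-- Shannon entropy (in nats) of the law `Q`. -/
noncomputable def entQ [Fintype B] [DecidableEq B] (Q : (B → Bool) → ℝ) : ℝ :=
  ∑ x : B → Bool, Real.negMulLog (Q x)

/-- Scandictability of the law `Q` on `{0,1}^B`. -/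
noncomputable def scandQ [Fintype B] [DecidableEq B] (l : Bool → unitInterval → ℝ)
    (Q : (B → Bool) → ℝ) : ℝ :=
  ⨅ Ψ : {Ψ : ∀ t : ℕ, (Fin t → Bool) → B // IsValidScan Ψ},
    optScanLoss l Q Ψ.1 / Fintype.card B

/-! ### Auxiliary development -/

section Seq

variable (l : Bool → unitInterval → ℝ)

/-- Sequential cumulative loss of predictor `F` on the bit string `b`. -/
noncomputable def seqLoss (n : ℕ) (F : ∀ t : ℕ, (Fin t → Bool) → unitInterval)
    (b : Fin n → Bool) : ℝ :=
  ∑ t : Fin n, l (b t) (F t.1 fun i : Fin t.1 => b ⟨i.1, i.isLt.trans t.isLt⟩)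

/-- Optimal expected sequential loss under the law `P`. -/
noncomputable def Lstar (n : ℕ) (P : (Fin n → Bool) → ℝ) : ℝ :=
  ⨅ F : ∀ t : ℕ, (Fin t → Bool) → unitInterval, ∑ b, P b * seqLoss l n F b

/-- Entropy of a law on bit strings. -/
noncomputable def ent {n : ℕ} (P : (Fin n → Bool) → ℝ) : ℝ :=
  ∑ b, Real.negMulLog (P b)

lemma sum_split {n : ℕ} (f : (Fin (n + 1) → Bool) → ℝ) :
    ∑ b, f b = (∑ b' : Fin n → Bool, f (Fin.cons false b'))
      + ∑ b' : Fin n → Bool, f (Fin.cons true b') := by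
  rw [← Fintype.sum_equiv (Fin.consEquiv fun _ : Fin (n + 1) => Bool)
      (fun p => f (Fin.cons p.1 p.2)) f (fun p => rfl),
    Fintype.sum_prod_type, Fintype.sum_bool]
  ring

lemma seqLoss_nonneg (hl : ∀ b q, 0 ≤ l b q) {n : ℕ} (F) (b : Fin n → Bool) :
    0 ≤ seqLoss l n F b :=
  Finset.sum_nonneg fun _ _ => hl _ _

lemma expLoss_nonneg (hl : ∀ b q, 0 ≤ l b q) {n : ℕ} {P : (Fin n → Bool) → ℝ}
    (hP0 : ∀ b, 0 ≤ P b) (F) : 0 ≤ ∑ b, P b * seqLoss l n F b :=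
  Finset.sum_nonneg fun b _ => mul_nonneg (hP0 b) (seqLoss_nonneg l hl F b)

lemma bddBelow_expLoss (hl : ∀ b q, 0 ≤ l b q) {n : ℕ} {P : (Fin n → Bool) → ℝ}
    (hP0 : ∀ b, 0 ≤ P b) :
    BddBelow (Set.range fun F : ∀ t : ℕ, (Fin t → Bool) → unitInterval =>
      ∑ b, P b * seqLoss l n F b) := by
  refine ⟨0, ?_⟩
  rintro _ ⟨F, rfl⟩
  exact expLoss_nonneg l hl hP0 F

lemma Lstar_nonneg (hl : ∀ b q, 0 ≤ l b q) {n : ℕ} {P : (Fin n → Bool) → ℝ}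
    (hP0 : ∀ b, 0 ≤ P b) : 0 ≤ Lstar l n P :=
  le_ciInf fun F => expLoss_nonneg l hl hP0 F

lemma prefix_cons {n : ℕ} (b : Fin (n + 1) → Bool) (t : Fin n) :
    (fun i : Fin (t.succ.1) => b ⟨i.1, i.isLt.trans t.succ.isLt⟩)
      = Fin.cons (b 0) (fun i : Fin t.1 => Fin.tail b ⟨i.1, i.isLt.trans t.isLt⟩) := by
  funext i
  refine Fin.cases ?_ ?_ i
  · rw [Fin.cons_zero]
    exact congrArg b (by ext; simp)
  · intro j
    rw [Fin.cons_succ]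
    exact congrArg b (by ext; simp [Fin.tail])

lemma seqLoss_succ {n : ℕ} (F) (b : Fin (n + 1) → Bool) :
    seqLoss l (n + 1) F b
      = l (b 0) (F 0 fun i => i.elim0)
        + seqLoss l n (fun t b' => F (t + 1) (Fin.cons (b 0) b')) (Fin.tail b) := by
  rw [seqLoss, seqLoss, Fin.sum_univ_succ]
  congr 1
  · exact congrArg (l (b 0)) (congrArg (F 0) (Subsingleton.elim _ _))
  · refine Finset.sum_congr rfl fun t _ => ?_
    rw [prefix_cons]
    rfl

/-- Conditional law given first bit `c` (with a junk value when the conditioning event is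
null). -/
noncomputable def condP {n : ℕ} (P : (Fin (n + 1) → Bool) → ℝ) (c : Bool) :
    (Fin n → Bool) → ℝ :=
  if (∑ b' : Fin n → Bool, P (Fin.cons c b')) = 0 then
    fun b' => if b' = (fun _ => false) then 1 else 0
  else fun b' => P (Fin.cons c b') / (∑ b' : Fin n → Bool, P (Fin.cons c b'))

lemma condP_nonneg {n : ℕ} {P : (Fin (n + 1) → Bool) → ℝ} (hP0 : ∀ b, 0 ≤ P b) (c : Bool)
    (b' : Fin n → Bool) : 0 ≤ condP P c b' := by
  rw [condP]
  split_ifs with h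
  · dsimp only; split_ifs <;> norm_num
  · have hpos : 0 < ∑ b' : Fin n → Bool, P (Fin.cons c b') :=
      lt_of_le_of_ne (Finset.sum_nonneg fun _ _ => hP0 _) (Ne.symm h)
    exact div_nonneg (hP0 _) hpos.le

lemma sum_condP {n : ℕ} {P : (Fin (n + 1) → Bool) → ℝ} (c : Bool) :
    ∑ b', condP P c b' = 1 := by
  rw [condP]
  split_ifs with h
  · simp
  · rw [← Finset.sum_div, div_self h]

lemma cons_eq_condP {n : ℕ} {P : (Fin (n + 1) → Bool) → ℝ} (hP0 : ∀ b, 0 ≤ P b) (c : Bool)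
    (b' : Fin n → Bool) :
    P (Fin.cons c b') = (∑ b'' : Fin n → Bool, P (Fin.cons c b'')) * condP P c b' := by
  rw [condP]
  split_ifs with h
  · rw [h, zero_mul]
    have := (Finset.sum_eq_zero_iff_of_nonneg (fun b _ => hP0 (Fin.cons c b))).mp h
    exact this b' (Finset.mem_univ _)
  · rw [mul_div_cancel₀ _ h]

lemma ent_succ {n : ℕ} {P : (Fin (n + 1) → Bool) → ℝ} (hP0 : ∀ b, 0 ≤ P b) :
    ent P = (Real.negMulLog (∑ b' : Fin n → Bool, P (Fin.cons false b'))
        + Real.negMulLog (∑ b' : Fin n → Bool, P (Fin.cons true b')))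
      + (∑ b' : Fin n → Bool, P (Fin.cons false b')) * ent (condP P false)
      + (∑ b' : Fin n → Bool, P (Fin.cons true b')) * ent (condP P true) := by
  have key : ∀ c : Bool,
      ∑ b' : Fin n → Bool, Real.negMulLog (P (Fin.cons c b'))
        = Real.negMulLog (∑ b' : Fin n → Bool, P (Fin.cons c b'))
          + (∑ b' : Fin n → Bool, P (Fin.cons c b')) * ent (condP P c) := by
    intro c
    set pc := ∑ b' : Fin n → Bool, P (Fin.cons c b') with hpc
    calc ∑ b' : Fin n → Bool, Real.negMulLog (P (Fin.cons c b'))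
        = ∑ b' : Fin n → Bool, (condP P c b' * Real.negMulLog pc
            + pc * Real.negMulLog (condP P c b')) := by
          refine Finset.sum_congr rfl fun b' _ => ?_
          rw [cons_eq_condP hP0 c b', ← hpc, Real.negMulLog_mul]
      _ = Real.negMulLog pc + pc * ent (condP P c) := by
          rw [Finset.sum_add_distrib, ← Finset.sum_mul, sum_condP, one_mul,
            ← Finset.mul_sum, ent]
  rw [ent, sum_split, key false, key true]
  ring

lemma expLoss_succ {n : ℕ} (l : Bool → unitInterval → ℝ) (P : (Fin (n + 1) → Bool) → ℝ)
    (F : ∀ t : ℕ, (Fin t → Bool) → unitInterval) :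
    ∑ b, P b * seqLoss l (n + 1) F b
      = ((∑ b' : Fin n → Bool, P (Fin.cons false b')) * l false (F 0 fun i => i.elim0)
          + (∑ b' : Fin n → Bool, P (Fin.cons true b')) * l true (F 0 fun i => i.elim0))
        + (∑ b' : Fin n → Bool, P (Fin.cons false b')
            * seqLoss l n (fun t b'' => F (t + 1) (Fin.cons false b'')) b')
        + (∑ b' : Fin n → Bool, P (Fin.cons true b')
            * seqLoss l n (fun t b'' => F (t + 1) (Fin.cons true b'')) b') := by
  rw [sum_split]
  have hpt : ∀ (c : Bool) (b' : Fin n → Bool),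
      P (Fin.cons c b') * seqLoss l (n + 1) F (Fin.cons c b')
        = P (Fin.cons c b') * l c (F 0 fun i => i.elim0)
          + P (Fin.cons c b')
            * seqLoss l n (fun t b'' => F (t + 1) (Fin.cons c b'')) b' := by
    intro c b'
    rw [seqLoss_succ, Fin.cons_zero, Fin.tail_cons, mul_add]
  rw [Finset.sum_congr rfl fun b' _ => hpt false b',
    Finset.sum_congr rfl fun b' _ => hpt true b',
    Finset.sum_add_distrib, Finset.sum_add_distrib, ← Finset.sum_mul, ← Finset.sum_mul]
  ring

lemma Lstar_succ {n : ℕ} (l : Bool → unitInterval → ℝ) (hl : ∀ b q, 0 ≤ l b q)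
    {P : (Fin (n + 1) → Bool) → ℝ} (hP0 : ∀ b, 0 ≤ P b) (hP1 : ∑ b, P b = 1) :
    Lstar l (n + 1) P
      = bayesEnv l (∑ b' : Fin n → Bool, P (Fin.cons true b'))
        + (∑ b' : Fin n → Bool, P (Fin.cons false b')) * Lstar l n (condP P false)
        + (∑ b' : Fin n → Bool, P (Fin.cons true b')) * Lstar l n (condP P true) := by
  set pf := ∑ b' : Fin n → Bool, P (Fin.cons false b') with hpf
  set pt := ∑ b' : Fin n → Bool, P (Fin.cons true b') with hpt
  have hpf0 : 0 ≤ pf := Finset.sum_nonneg fun _ _ => hP0 _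
  have hpt0 : 0 ≤ pt := Finset.sum_nonneg fun _ _ => hP0 _
  have hsum : pf + pt = 1 := by rw [hpf, hpt, ← sum_split, hP1]
  have hbb : BddBelow (Set.range fun q : unitInterval =>
      (1 - pt) * l false q + pt * l true q) := by
    refine ⟨0, ?_⟩
    rintro _ ⟨q, rfl⟩
    have : (1 : ℝ) - pt = pf := by linarith
    rw [this]
    exact add_nonneg (mul_nonneg hpf0 (hl _ _)) (mul_nonneg hpt0 (hl _ _))
  have hcond : ∀ c (b' : Fin n → Bool), 0 ≤ condP P c b' := condP_nonneg hP0
  -- rewrite the c-branch sums through condP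
  have hbranch : ∀ (c : Bool) (G : (∀ t : ℕ, (Fin t → Bool) → unitInterval)),
      (∑ b' : Fin n → Bool, P (Fin.cons c b') * seqLoss l n G b')
        = (∑ b'' : Fin n → Bool, P (Fin.cons c b''))
          * ∑ b' : Fin n → Bool, condP P c b' * seqLoss l n G b' := by
    intro c G
    rw [Finset.mul_sum]
    refine Finset.sum_congr rfl fun b' _ => ?_
    rw [cons_eq_condP hP0 c b', mul_assoc]
  apply le_antisymm
  · -- Lstar ≤ RHS, via ε-optimal pieces
    refine le_of_forall_pos_le_add fun ε hε => ?_
    obtain ⟨q, hq⟩ := exists_lt_of_ciInf_lt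
      (show bayesEnv l pt < bayesEnv l pt + ε / 2 by linarith)
    obtain ⟨F0, hF0⟩ := exists_lt_of_ciInf_lt
      (show Lstar l n (condP P false) < Lstar l n (condP P false) + ε / 4 by linarith)
    obtain ⟨F1, hF1⟩ := exists_lt_of_ciInf_lt
      (show Lstar l n (condP P true) < Lstar l n (condP P true) + ε / 4 by linarith)
    set F : ∀ t : ℕ, (Fin t → Bool) → unitInterval := fun t =>
      Nat.casesOn t (fun _ => q)
        (fun t' (b : Fin (t' + 1) → Bool) =>
          if b 0 then F1 t' (Fin.tail b) else F0 t' (Fin.tail b)) with hF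
    have hshift : ∀ c : Bool, (fun t (b'' : Fin t → Bool) => F (t + 1) (Fin.cons c b''))
        = (if c then F1 else F0) := by
      intro c
      funext t b''
      cases c <;> simp [hF, Fin.cons_zero, Fin.tail_cons]
    refine ciInf_le_of_le (bddBelow_expLoss l hl hP0) F ?_
    rw [expLoss_succ, hbranch false, hbranch true, hshift false, hshift true]
    have hq0 : F 0 (fun i => i.elim0) = q := rfl
    rw [hq0]
    simp only [if_true, if_false, Bool.false_eq_true, ite_false, ite_true]
    have h1 : pf * l false q + pt * l true q ≤ bayesEnv l pt + ε / 2 := by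
      have : (1 - pt) * l false q + pt * l true q ≤ bayesEnv l pt + ε / 2 := hq.le
      have hpfe : pf = 1 - pt := by linarith
      rw [hpfe]; exact this
    have h2 : pf * (∑ b', condP P false b' * seqLoss l n F0 b')
        ≤ pf * (Lstar l n (condP P false) + ε / 4) :=
      mul_le_mul_of_nonneg_left hF0.le hpf0
    have h3 : pt * (∑ b', condP P true b' * seqLoss l n F1 b')
        ≤ pt * (Lstar l n (condP P true) + ε / 4) :=
      mul_le_mul_of_nonneg_left hF1.le hpt0
    nlinarith [hpf0, hpt0]
  · -- RHS ≤ Lstar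
    refine le_ciInf fun F => ?_
    rw [expLoss_succ, hbranch false, hbranch true]
    have h1 : bayesEnv l pt ≤ pf * l false (F 0 fun i => i.elim0)
        + pt * l true (F 0 fun i => i.elim0) := by
      have h : bayesEnv l pt ≤ (1 - pt) * l false (F 0 fun i => i.elim0)
          + pt * l true (F 0 fun i => i.elim0) := ciInf_le hbb (F 0 fun i => i.elim0)
      have e : ((1 : ℝ) - pt) * l false (F 0 fun i => i.elim0)
          = pf * l false (F 0 fun i => i.elim0) := by
        rw [show (1 : ℝ) - pt = pf by linarith]
      linarith
    have h2 : Lstar l n (condP P false)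
        ≤ ∑ b', condP P false b' * seqLoss l n (fun t b'' => F (t + 1) (Fin.cons false b'')) b' :=
      ciInf_le (bddBelow_expLoss l hl (hcond false)) _
    have h3 : Lstar l n (condP P true)
        ≤ ∑ b', condP P true b' * seqLoss l n (fun t b'' => F (t + 1) (Fin.cons true b'')) b' :=
      ciInf_le (bddBelow_expLoss l hl (hcond true)) _
    nlinarith [hpf0, hpt0]

lemma negMulLog_le_one {p : ℝ} (h0 : 0 ≤ p) (h1 : p ≤ 1) : Real.negMulLog p ≤ 1 := by
  rcases eq_or_lt_of_le h0 with h | h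
  · rw [← h, Real.negMulLog_zero]; norm_num
  · have hlog : Real.log p⁻¹ ≤ p⁻¹ - 1 :=
      Real.log_le_sub_one_of_pos (by positivity)
    have : Real.negMulLog p = p * Real.log p⁻¹ := by
      rw [Real.negMulLog, Real.log_inv]; ring
    rw [this]
    calc p * Real.log p⁻¹ ≤ p * (p⁻¹ - 1) := mul_le_mul_of_nonneg_left hlog h0
      _ = 1 - p := by field_simp
      _ ≤ 1 := by linarith

lemma hb_nonneg {p : ℝ} (h0 : 0 ≤ p) (h1 : p ≤ 1) : 0 ≤ hb p :=
  add_nonneg (Real.negMulLog_nonneg h0 h1)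
    (Real.negMulLog_nonneg (by linarith) (by linarith))

lemma hb_le_two {p : ℝ} (h0 : 0 ≤ p) (h1 : p ≤ 1) : hb p ≤ 2 := by
  have := negMulLog_le_one h0 h1
  have := negMulLog_le_one (p := 1 - p) (by linarith) (by linarith)
  rw [hb]; linarith

lemma bayesEnv_nonneg (l : Bool → unitInterval → ℝ) (hl : ∀ b q, 0 ≤ l b q) {p : ℝ}
    (h0 : 0 ≤ p) (h1 : p ≤ 1) : 0 ≤ bayesEnv l p :=
  le_ciInf fun q => add_nonneg (mul_nonneg (by linarith) (hl _ _)) (mul_nonneg h0 (hl _ _))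

lemma bayesEnv_le (l : Bool → unitInterval → ℝ) (hl : ∀ b q, 0 ≤ l b q) {p : ℝ}
    (h0 : 0 ≤ p) (h1 : p ≤ 1) : bayesEnv l p ≤ l false 0 + l true 0 := by
  have hbb : BddBelow (Set.range fun q : unitInterval =>
      (1 - p) * l false q + p * l true q) := by
    refine ⟨0, ?_⟩
    rintro _ ⟨q, rfl⟩
    exact add_nonneg (mul_nonneg (by linarith) (hl _ _)) (mul_nonneg h0 (hl _ _))
  refine (ciInf_le hbb (0 : unitInterval)).trans ?_
  have h2 : (1 - p) * l false 0 ≤ l false 0 :=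
    mul_le_of_le_one_left (hl _ _) (by linarith)
  have h3 : p * l true 0 ≤ l true 0 := mul_le_of_le_one_left (hl _ _) h1
  linarith

lemma bddAbove_epsF (l : Bool → unitInterval → ℝ) (hl : ∀ b q, 0 ≤ l b q) (α β : ℝ) :
    BddAbove (Set.range fun p : unitInterval =>
      |α * hb (p : ℝ) + β - bayesEnv l (p : ℝ)|) := by
  refine ⟨|α| * 2 + |β| + (l false 0 + l true 0), ?_⟩
  rintro _ ⟨p, rfl⟩
  have h0 : (0 : ℝ) ≤ p := p.2.1
  have h1 : (p : ℝ) ≤ 1 := p.2.2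
  have hB0 : 0 ≤ bayesEnv l (p : ℝ) := bayesEnv_nonneg l hl h0 h1
  have hB1 : bayesEnv l (p : ℝ) ≤ l false 0 + l true 0 := bayesEnv_le l hl h0 h1
  have habs : |α * hb (p : ℝ) + β - bayesEnv l (p : ℝ)|
      ≤ |α * hb (p : ℝ)| + |β| + |bayesEnv l (p : ℝ)| :=
    (abs_sub _ _).trans (by gcongr; exact abs_add_le _ _)
  have h2 : |α * hb (p : ℝ)| ≤ |α| * 2 := by
    rw [abs_mul, abs_of_nonneg (hb_nonneg h0 h1)]
    exact mul_le_mul_of_nonneg_left (hb_le_two h0 h1) (abs_nonneg _)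
  have h3 : |bayesEnv l (p : ℝ)| = bayesEnv l (p : ℝ) := abs_of_nonneg hB0
  linarith

lemma abs_le_epsF (l : Bool → unitInterval → ℝ) (hl : ∀ b q, 0 ≤ l b q) (α β : ℝ)
    {p : ℝ} (h0 : 0 ≤ p) (h1 : p ≤ 1) :
    |α * hb p + β - bayesEnv l p| ≤ epsF l α β :=
  le_ciSup (bddAbove_epsF l hl α β) (⟨p, h0, h1⟩ : unitInterval)

lemma epsF_nonneg (l : Bool → unitInterval → ℝ) (hl : ∀ b q, 0 ≤ l b q) (α β : ℝ) :
    0 ≤ epsF l α β :=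
  (abs_nonneg _).trans (abs_le_epsF l hl α β le_rfl zero_le_one)

/-- The key induction: chain rule bound for bit strings of length `n`. -/
lemma key (l : Bool → unitInterval → ℝ) (hl : ∀ b q, 0 ≤ l b q) :
    ∀ (n : ℕ) (P : (Fin n → Bool) → ℝ), (∀ b, 0 ≤ P b) → (∑ b, P b = 1) →
    ∀ α β : ℝ, |α * ent P + n * β - Lstar l n P| ≤ n * epsF l α β := by
  intro n
  induction n with
  | zero =>
    intro P hP0 hP1 α β
    have hone : ∀ b : Fin 0 → Bool, P b = 1 := by
      intro b
      rw [← hP1, Fintype.sum_subsingleton _ b]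
    have hent : ent P = 0 := by
      rw [ent]
      exact Finset.sum_eq_zero fun b _ => by rw [hone b, Real.negMulLog_one]
    have hL : Lstar l 0 P = 0 := by
      rw [Lstar]
      have : ∀ F : ∀ t : ℕ, (Fin t → Bool) → unitInterval,
          (∑ b, P b * seqLoss l 0 F b) = 0 := by
        intro F
        refine Finset.sum_eq_zero fun b _ => ?_
        rw [seqLoss]
        simp
      simp only [this]
      exact ciInf_const
    rw [hent, hL]
    simp
  | succ n ih =>
    intro P hP0 hP1 α β
    set pf := ∑ b' : Fin n → Bool, P (Fin.cons false b') with hpf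
    set pt := ∑ b' : Fin n → Bool, P (Fin.cons true b') with hpt
    have hpf0 : 0 ≤ pf := Finset.sum_nonneg fun _ _ => hP0 _
    have hpt0 : 0 ≤ pt := Finset.sum_nonneg fun _ _ => hP0 _
    have hsum : pf + pt = 1 := by rw [hpf, hpt, ← sum_split, hP1]
    have hE := ent_succ hP0
    have hL := Lstar_succ l hl hP0 hP1
    rw [← hpf, ← hpt] at hE hL
    have hhb : Real.negMulLog pf + Real.negMulLog pt = hb pt := by
      rw [hb, show (1 : ℝ) - pt = pf by linarith, add_comm]
    have hA := abs_le_epsF l hl α β hpt0 (by linarith : pt ≤ 1)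
    have hf := ih (condP P false) (condP_nonneg hP0 false) (sum_condP false) α β
    have ht := ih (condP P true) (condP_nonneg hP0 true) (sum_condP true) α β
    have heq : α * ent P + (n + 1 : ℕ) * β - Lstar l (n + 1) P
        = (α * hb pt + β - bayesEnv l pt)
          + pf * (α * ent (condP P false) + n * β - Lstar l n (condP P false))
          + pt * (α * ent (condP P true) + n * β - Lstar l n (condP P true)) := by
      rw [hE, hL, ← hhb]
      push_cast
      linear_combination (-(↑n * β)) * hsum
    rw [heq]
    have hε := epsF_nonneg l hl α β
    calc |(α * hb pt + β - bayesEnv l pt)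
          + pf * (α * ent (condP P false) + n * β - Lstar l n (condP P false))
          + pt * (α * ent (condP P true) + n * β - Lstar l n (condP P true))|
        ≤ |α * hb pt + β - bayesEnv l pt|
          + |pf * (α * ent (condP P false) + n * β - Lstar l n (condP P false))|
          + |pt * (α * ent (condP P true) + n * β - Lstar l n (condP P true))| := by
          exact (abs_add_le _ _).trans (by gcongr; exact abs_add_le _ _)
      _ ≤ epsF l α β + pf * (n * epsF l α β) + pt * (n * epsF l α β) := by
          rw [abs_mul, abs_mul, abs_of_nonneg hpf0, abs_of_nonneg hpt0]
          gcongr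
      _ = (n + 1 : ℕ) * epsF l α β := by
          push_cast
          linear_combination (↑n * epsF l α β) * hsum

end Seq

section Reduce

lemma visits_def (Ψ : ∀ t : ℕ, (Fin t → A) → B) (x : B → A) (t : ℕ) :
    visits Ψ x t = Ψ t fun i : Fin t => x (visits Ψ x i) := by
  rw [visits]

variable [Fintype B] [DecidableEq B]

/-- The sequence of bits revealed by the scan `Ψ` on the configuration `x`. -/
def scanBits (Ψ : ∀ t : ℕ, (Fin t → Bool) → B) (x : B → Bool) :
    Fin (Fintype.card B) → Bool :=
  fun t => x (visits Ψ x t.1)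

lemma scanBits_injective (Ψ : ∀ t : ℕ, (Fin t → Bool) → B) (hΨ : IsValidScan Ψ) :
    Function.Injective (scanBits Ψ) := by
  intro x y h
  have hv : ∀ t : Fin (Fintype.card B), visits Ψ x t.1 = visits Ψ y t.1 := by
    intro t
    rw [visits_def, visits_def]
    congr 1
    funext i
    exact congrFun h ⟨i.1, i.isLt.trans t.isLt⟩
  funext s
  obtain ⟨t, ht⟩ := (hΨ x).2 s
  have h1 : x (visits Ψ x t.1) = y (visits Ψ y t.1) := congrFun h t
  rw [← ht]
  calc x (visits Ψ x t.1) = y (visits Ψ y t.1) := h1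
    _ = y (visits Ψ x t.1) := by rw [hv t]

/-- The scan of a valid scheme sets up a bijection between configurations and revealed
bit strings. -/
noncomputable def scanEquiv (Ψ : ∀ t : ℕ, (Fin t → Bool) → B) (hΨ : IsValidScan Ψ) :
    (B → Bool) ≃ (Fin (Fintype.card B) → Bool) :=
  Equiv.ofBijective (scanBits Ψ)
    ((Fintype.bijective_iff_injective_and_card _).mpr
      ⟨scanBits_injective Ψ hΨ, by simp [Fintype.card_fun]⟩)

lemma cumLoss_eq_seqLoss (l : Bool → unitInterval → ℝ) (Ψ : ∀ t : ℕ, (Fin t → Bool) → B)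
    (F : ∀ t : ℕ, (Fin t → Bool) → unitInterval) (x : B → Bool) :
    cumLoss l Ψ F x = seqLoss l (Fintype.card B) F (scanBits Ψ x) := rfl

end Reduce

/-- For an arbitrarily distributed binary random field on the finite set
of sites `B` and any scan `Ψ` accompanied by its optimal predictor, the normalized expected
cumulative loss is within `ε_l(α,β)` of the best affine function of the normalized entropy. -/
theorem statement15 {B : Type*} [Fintype B] [DecidableEq B] (hB : 0 < Fintype.card B)
    (l : Bool → unitInterval → ℝ) (hl : ∀ b q, 0 ≤ l b q)
    (Q : (B → Bool) → ℝ) (hQ0 : ∀ x, 0 ≤ Q x) (hQ1 : ∑ x, Q x = 1)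
    (Ψ : ∀ t : ℕ, (Fin t → Bool) → B) (hΨ : IsValidScan Ψ)
    (α β : ℝ) :
    |α * (entQ Q / Fintype.card B) + β - optScanLoss l Q Ψ / Fintype.card B|
      ≤ epsF l α β := by
  set n := Fintype.card B with hn
  set e := scanEquiv Ψ hΨ with he
  set P : (Fin n → Bool) → ℝ := fun b => Q (e.symm b) with hP
  have hPx : ∀ x, P (e x) = Q x := fun x => by rw [hP]; simp
  have hP0 : ∀ b, 0 ≤ P b := fun b => hQ0 _
  have hP1 : ∑ b, P b = 1 := by
    rw [← hQ1]
    exact (Fintype.sum_equiv e Q P fun x => (hPx x).symm).symm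
  have hent : entQ Q = ent P :=
    Fintype.sum_equiv e _ _ fun x => by rw [hPx]
  have hloss : optScanLoss l Q Ψ = Lstar l n P := by
    rw [optScanLoss, Lstar]
    refine congrArg _ (funext fun F => ?_)
    exact Fintype.sum_equiv e _ _ fun x => by
      rw [hPx, cumLoss_eq_seqLoss]; rfl
  have hkey := key l hl n P hP0 hP1 α β
  have hnpos : (0 : ℝ) < (n : ℝ) := by exact_mod_cast hB
  rw [hent, hloss,
    show α * (ent P / (n : ℝ)) + β - Lstar l n P / (n : ℝ)
      = (α * ent P + (n : ℝ) * β - Lstar l n P) / (n : ℝ) by field_simp,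
    abs_div, abs_of_pos hnpos, div_le_iff₀ hnpos]
  linarith

end Scandiction
end

section
/- Let x₁^N be a binary sequence. For every k with 0 < k < N, every j with 0 < j ≤ k, every i with 0 < i ≤ j, and every s ∈ {0,1}^i: P̂^{k+1}(s) − (k+1−j)/(N−k) ≤ P̂^{j}(s) ≤ P̂^{k+1}(s) + (k+1−j)/(N−k), where P̂^{w}(s) denotes the marginal, on the first i symbols of the length-w window, of the order-w empirical distribution of x₁^N. -/
open Finset

namespace Scandiction

/-- Number of length-`w` windows of `x₁^N` (starting positions `0 ≤ r ≤ N - w`) whose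
first `i` symbols equal `s`. -/
def margEmpCount (y : ℕ → Bool) (N w : ℕ) {i : ℕ} (s : Fin i → Bool) : ℕ :=
  ((Finset.range (N - w + 1)).filter fun r => ∀ j : Fin i, y (r + j.1) = s j).card

/-- The marginal, on the first `i` symbols of the length-`w` window, of the order-`w`
empirical distribution of `x₁^N`. -/
noncomputable def margEmp (y : ℕ → Bool) (N w : ℕ) {i : ℕ} (s : Fin i → Bool) : ℝ :=
  (margEmpCount y N w s : ℝ) / ((N : ℝ) - w + 1)

/-- For every binary sequence, `0 < k < N`, `0 < j ≤ k`, `0 < i ≤ j`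
and `s ∈ {0,1}^i`:
`P̂^{k+1}(s) − (k+1−j)/(N−k) ≤ P̂^{j}(s) ≤ P̂^{k+1}(s) + (k+1−j)/(N−k)`. -/
theorem statement17 (y : ℕ → Bool) (N k j i : ℕ)
    (hk0 : 0 < k) (hkN : k < N) (hj0 : 0 < j) (hjk : j ≤ k) (hi0 : 0 < i) (hij : i ≤ j)
    (s : Fin i → Bool) :
    margEmp y N (k + 1) s - ((k : ℝ) + 1 - j) / ((N : ℝ) - k) ≤ margEmp y N j s
    ∧ margEmp y N j s ≤ margEmp y N (k + 1) s + ((k : ℝ) + 1 - j) / ((N : ℝ) - k) := by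
  have hr1 : N - (k + 1) + 1 = N - k := by omega
  have hr2 : N - k ≤ N - j + 1 := by omega
  -- count inequalities
  have h1 : margEmpCount y N (k + 1) s ≤ margEmpCount y N j s := by
    apply Finset.card_le_card
    apply Finset.filter_subset_filter
    rw [Finset.range_subset_range]
    omega
  have h2 : margEmpCount y N j s ≤ margEmpCount y N (k + 1) s + (k + 1 - j) := by
    unfold margEmpCount
    have hsub : (Finset.range (N - j + 1)).filter (fun r => ∀ t : Fin i, y (r + t.1) = s t)
        ⊆ ((Finset.range (N - (k + 1) + 1)).filter
            (fun r => ∀ t : Fin i, y (r + t.1) = s t)) ∪ Finset.Ico (N - k) (N - j + 1) := by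
      intro r hr
      simp only [Finset.mem_filter, Finset.mem_range] at hr
      by_cases hc : r < N - k
      · exact Finset.mem_union_left _ (by
          simp only [Finset.mem_filter, Finset.mem_range]
          exact ⟨by omega, hr.2⟩)
      · exact Finset.mem_union_right _ (by
          simp only [Finset.mem_Ico]; omega)
    calc _ ≤ _ := Finset.card_le_card hsub
      _ ≤ _ + (Finset.Ico (N - k) (N - j + 1)).card := Finset.card_union_le _ _
      _ = _ := by rw [Nat.card_Ico]; omega
  have h3 : margEmpCount y N (k + 1) s ≤ N - k := by
    calc margEmpCount y N (k + 1) s ≤ (Finset.range (N - (k + 1) + 1)).card :=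
          Finset.card_filter_le _ _
      _ = N - k := by rw [Finset.card_range]; omega
  -- pass to ℝ
  set a : ℝ := (margEmpCount y N (k + 1) s : ℝ) with ha
  set b : ℝ := (margEmpCount y N j s : ℝ) with hb
  have ha1 : a ≤ b := by rw [ha, hb]; exact_mod_cast h1
  have hd : ((k : ℝ) + 1 - j) = ((k + 1 - j : ℕ) : ℝ) := by
    push_cast [Nat.cast_sub (by omega : j ≤ k + 1)]; ring
  have ha2 : b ≤ a + ((k : ℝ) + 1 - j) := by
    rw [hd, ha, hb]; exact_mod_cast h2
  have ha3 : a ≤ (N : ℝ) - k := by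
    have : ((N - k : ℕ) : ℝ) = (N : ℝ) - k := by
      push_cast [Nat.cast_sub (le_of_lt hkN)]; ring
    rw [← this, ha]; exact_mod_cast h3
  have hM : (0 : ℝ) < (N : ℝ) - k := by
    have : (k : ℝ) < N := by exact_mod_cast hkN
    linarith
  have hD : (0 : ℝ) < (N : ℝ) - j + 1 := by
    have : (j : ℝ) ≤ k := by exact_mod_cast hjk
    linarith
  have hMD : (N : ℝ) - k ≤ (N : ℝ) - j + 1 := by
    have : (j : ℝ) ≤ k := by exact_mod_cast hjk
    linarith
  have hdge : (0 : ℝ) ≤ (k : ℝ) + 1 - j := by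
    have : (j : ℝ) ≤ k := by exact_mod_cast hjk
    linarith
  have hb0 : 0 ≤ b := by positivity
  have hmk : margEmp y N (k + 1) s = a / ((N : ℝ) - k) := by
    unfold margEmp
    rw [ha]
    congr 1
    push_cast
    ring
  have hmj : margEmp y N j s = b / ((N : ℝ) - j + 1) := rfl
  rw [hmk, hmj]
  constructor
  · rw [div_sub_div_same, div_le_div_iff₀ hM hD]
    nlinarith [mul_nonneg hdge (sub_nonneg.2 ha3)]
  · rw [← add_div, div_le_div_iff₀ hD hM]
    nlinarith [mul_nonneg hb0 (sub_nonneg.2 hMD)]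

end Scandiction
end
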